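/- arXiv:2105.13302 — 4 statements merged into one kernel-verified Lean document; each statement's English description precedes it below -/
import Mathlib

section
/- If Z is a standard Gaussian random variable and x ≥ 0, then E[η_soft(Z; x)²] = 2[(1+x²)Φ(-x) - xφ(x)], where φ and Φ are the standard normal density and CDF. -/
open MeasureTheory ProbabilityTheory

/-- The standard normal density. -/
noncomputable def stdGaussPDF (t : ℝ) : ℝ := Real.exp (-t ^ 2 / 2) / Real.sqrt (2 * Real.pi)

/-- The standard normal cumulative distribution function. -/
noncomputable def stdGaussCDF (x : ℝ) : ℝ := ∫ t in Set.Iic x, stdGaussPDF t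

/-- The soft-thresholding function with threshold θ. -/
noncomputable def softThresh (y θ : ℝ) : ℝ :=
  if y > θ then y - θ else if y < -θ then y + θ else 0

open Real Filter Set
open scoped NNReal ENNReal

lemma continuous_stdGaussPDF : Continuous stdGaussPDF := by
  unfold stdGaussPDF
  fun_prop

lemma stdGaussPDF_nonneg (t : ℝ) : 0 ≤ stdGaussPDF t := by
  unfold stdGaussPDF
  positivity

lemma stdGaussPDF_neg (t : ℝ) : stdGaussPDF (-t) = stdGaussPDF t := by
  simp [stdGaussPDF]

lemma stdGaussPDF_eq (t : ℝ) :
    stdGaussPDF t = Real.exp (-(2⁻¹:ℝ) * t ^ 2) * (Real.sqrt (2 * Real.pi))⁻¹ := by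
  rw [stdGaussPDF, div_eq_mul_inv]
  ring_nf

lemma integrable_stdGaussPDF : Integrable stdGaussPDF := by
  have h0 : Integrable fun z : ℝ => Real.exp (-(2⁻¹:ℝ) * z ^ 2) :=
    integrable_exp_neg_mul_sq (by norm_num)
  exact (h0.mul_const _).congr (Filter.Eventually.of_forall fun z => (stdGaussPDF_eq z).symm)

lemma integrable_sq_shift (a : ℝ) : Integrable fun z : ℝ => (z + a) ^ 2 * stdGaussPDF z := by
  have h0 : Integrable fun z : ℝ => Real.exp (-(2⁻¹:ℝ) * z ^ 2) :=
    integrable_exp_neg_mul_sq (by norm_num)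
  have h1 : Integrable fun z : ℝ => z * Real.exp (-(2⁻¹:ℝ) * z ^ 2) :=
    integrable_mul_exp_neg_mul_sq (by norm_num)
  have h2 : Integrable fun z : ℝ => z ^ (2:ℝ) * Real.exp (-(2⁻¹:ℝ) * z ^ 2) :=
    integrable_rpow_mul_exp_neg_mul_sq (b := 2⁻¹) (s := 2) (by norm_num) (by norm_num)
  have h2' : Integrable fun z : ℝ => z ^ 2 * Real.exp (-(2⁻¹:ℝ) * z ^ 2) := by
    refine h2.congr (Filter.Eventually.of_forall fun z => ?_)
    norm_num [show ((2:ℝ)) = ((2:ℕ):ℝ) by norm_num, Real.rpow_natCast]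
  have h := ((h2'.add ((h1.const_mul (2*a)))).add (h0.const_mul (a^2))).mul_const
    (Real.sqrt (2 * Real.pi))⁻¹
  refine h.congr (Filter.Eventually.of_forall fun z => ?_)
  simp only [Pi.add_apply]
  rw [stdGaussPDF_eq]
  ring

lemma hasDerivAt_stdGaussPDF (z : ℝ) :
    HasDerivAt stdGaussPDF (-z * stdGaussPDF z) z := by
  have h1 : HasDerivAt (fun t : ℝ => -t ^ 2 / 2) (-z) z := by
    have := ((hasDerivAt_pow 2 z).neg).div_const 2
    refine this.congr_deriv ?_
    simp
    ring
  have h2 := (h1.exp).div_const (Real.sqrt (2 * Real.pi))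
  have : stdGaussPDF = fun t => Real.exp (-t ^ 2 / 2) / Real.sqrt (2 * Real.pi) := rfl
  rw [this]
  refine h2.congr_deriv ?_
  ring

lemma hasDerivAt_stdGaussCDF (z : ℝ) :
    HasDerivAt stdGaussCDF (stdGaussPDF z) z := by
  have heq : ∀ w : ℝ, stdGaussCDF w = stdGaussCDF 0 + ∫ t in (0:ℝ)..w, stdGaussPDF t := by
    intro w
    rw [← intervalIntegral.integral_Iic_sub_Iic integrable_stdGaussPDF.integrableOn
      integrable_stdGaussPDF.integrableOn]
    rw [stdGaussCDF, stdGaussCDF]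
    ring
  have hd : HasDerivAt (fun w => stdGaussCDF 0 + ∫ t in (0:ℝ)..w, stdGaussPDF t)
      (stdGaussPDF z) z := by
    refine HasDerivAt.const_add _ ?_
    exact intervalIntegral.integral_hasDerivAt_right
      integrable_stdGaussPDF.intervalIntegrable
      (continuous_stdGaussPDF.stronglyMeasurable.stronglyMeasurableAtFilter)
      continuous_stdGaussPDF.continuousAt
  exact hd.congr_of_eventuallyEq (Filter.Eventually.of_forall heq)

lemma tendsto_exp_sq_atTop : Tendsto (fun w : ℝ => Real.exp (-w ^ 2 / 2)) atTop (nhds 0) := by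
  apply Real.tendsto_exp_atBot.comp
  apply Filter.Tendsto.atBot_div_const (by norm_num : (0:ℝ) < 2)
  exact tendsto_neg_atBot_iff.mpr (tendsto_pow_atTop (by norm_num))

lemma tendsto_stdGaussPDF_atBot : Tendsto stdGaussPDF atBot (nhds 0) := by
  have := (tendsto_exp_sq_atTop.div_const (Real.sqrt (2 * Real.pi))).comp
    tendsto_neg_atBot_atTop
  rw [zero_div] at this
  refine this.congr fun z => ?_
  simp [Function.comp, stdGaussPDF]

lemma tendsto_mul_stdGaussPDF_atBot :
    Tendsto (fun z : ℝ => z * stdGaussPDF z) atBot (nhds 0) := by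
  have hA : Tendsto (fun w : ℝ => w * Real.exp (-(2⁻¹:ℝ) * w ^ 2)) atTop (nhds 0) := by
    have ho := rpow_mul_exp_neg_mul_sq_isLittleO_exp_neg (by norm_num : (0:ℝ) < 2⁻¹) 1
    have ho' : (fun w : ℝ => w * Real.exp (-(2⁻¹:ℝ) * w ^ 2)) =o[atTop]
        fun x => Real.exp (-(1/2) * x) := by
      refine ho.congr' (Filter.Eventually.of_forall fun w => ?_)
        (Filter.Eventually.of_forall fun w => rfl)
      norm_num
    have hg : Tendsto (fun x : ℝ => Real.exp (-(1/2) * x)) atTop (nhds 0) := by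
      apply Real.tendsto_exp_atBot.comp
      exact Tendsto.const_mul_atTop_of_neg (by norm_num) tendsto_id
    exact ho'.isBigO.trans_tendsto hg
  have h2 := ((hA.div_const (Real.sqrt (2 * Real.pi))).comp tendsto_neg_atBot_atTop).neg
  rw [zero_div, neg_zero] at h2
  refine h2.congr fun z => ?_
  simp only [Function.comp]
  rw [stdGaussPDF_eq]
  ring_nf

lemma tendsto_stdGaussCDF_atBot : Tendsto stdGaussCDF atBot (nhds 0) := by
  have h : Tendsto (fun z : ℝ => ∫ t, (Iic z).indicator stdGaussPDF t) atBot
      (nhds (∫ _ : ℝ, (0:ℝ))) := by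
    refine tendsto_integral_filter_of_dominated_convergence stdGaussPDF ?_ ?_
      integrable_stdGaussPDF ?_
    · exact Filter.Eventually.of_forall fun z =>
        (continuous_stdGaussPDF.stronglyMeasurable.indicator measurableSet_Iic).aestronglyMeasurable
    · refine Filter.Eventually.of_forall fun z => Filter.Eventually.of_forall fun t => ?_
      rw [Real.norm_eq_abs]
      refine abs_le.mpr ⟨?_, ?_⟩
      · refine le_trans (neg_nonpos.mpr (stdGaussPDF_nonneg t)) ?_
        exact Set.indicator_nonneg (fun s _ => stdGaussPDF_nonneg s) t
      · by_cases ht : t ∈ Iic z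
        · rw [Set.indicator_of_mem ht]
        · rw [Set.indicator_of_notMem ht]
          exact stdGaussPDF_nonneg t
    · refine Filter.Eventually.of_forall fun t => ?_
      have : ∀ᶠ z : ℝ in atBot, (Iic z).indicator stdGaussPDF t = 0 := by
        filter_upwards [eventually_lt_atBot t] with z hz
        exact Set.indicator_of_notMem (by simpa using hz.not_ge) _
      exact Tendsto.congr' (by filter_upwards [this] with z hz; exact hz.symm) tendsto_const_nhds
  simp only [integral_zero] at h
  refine h.congr fun z => ?_
  rw [integral_indicator measurableSet_Iic]
  rfl

lemma key_integral (x : ℝ) (hx : 0 ≤ x) :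
    ∫ z in Iic (-x), (z + x) ^ 2 * stdGaussPDF z =
      (1 + x ^ 2) * stdGaussCDF (-x) - x * stdGaussPDF x := by
  set H : ℝ → ℝ := fun z => (1 + x ^ 2) * stdGaussCDF z - (2 * x + z) * stdGaussPDF z with hH
  have hderiv : ∀ z ∈ Iic (-x), HasDerivAt H ((z + x) ^ 2 * stdGaussPDF z) z := by
    intro z _
    have h1 := (hasDerivAt_stdGaussCDF z).const_mul (1 + x ^ 2)
    have h2 := (((hasDerivAt_id z).const_add (2 * x)).mul (hasDerivAt_stdGaussPDF z))
    have := h1.sub h2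
    refine this.congr_deriv ?_
    simp only [id_eq]
    ring
  have hint : IntegrableOn (fun z => (z + x) ^ 2 * stdGaussPDF z) (Iic (-x)) :=
    (integrable_sq_shift x).integrableOn
  have htend : Tendsto H atBot (nhds 0) := by
    have h1 := tendsto_stdGaussCDF_atBot.const_mul (1 + x ^ 2)
    have h2 : Tendsto (fun z : ℝ => (2 * x + z) * stdGaussPDF z) atBot (nhds 0) := by
      have := (tendsto_stdGaussPDF_atBot.const_mul (2 * x)).add tendsto_mul_stdGaussPDF_atBot
      rw [mul_zero, add_zero] at this
      refine this.congr fun z => ?_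
      ring
    have := h1.sub h2
    simpa using this
  have := integral_Iic_of_hasDerivAt_of_tendsto' hderiv hint htend
  rw [this, hH]
  simp only [sub_zero]
  rw [stdGaussPDF_neg]
  ring

/-- For Z standard Gaussian and x ≥ 0,
E[η_soft(Z;x)²] = 2[(1+x²)Φ(-x) - xφ(x)]. -/
theorem expectation_softThresh_sq (x : ℝ) (hx : 0 ≤ x) :
    ∫ z, (softThresh z x) ^ 2 ∂(gaussianReal 0 1) =
      2 * ((1 + x ^ 2) * stdGaussCDF (-x) - x * stdGaussPDF x) := by
  set h₁ : ℝ → ℝ := fun z => max (z - x) 0 ^ 2 * stdGaussPDF z with hh₁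
  set h₂ : ℝ → ℝ := fun z => max (-z - x) 0 ^ 2 * stdGaussPDF z with hh₂
  have hpdf : ∀ z, gaussianPDFReal 0 1 z = stdGaussPDF z := by
    intro z
    simp [gaussianPDFReal, stdGaussPDF]
    ring_nf
  -- step 1: write the gaussian integral as a Lebesgue integral
  have hmap : gaussianReal 0 1 =
      volume.withDensity fun z => ((Real.toNNReal (gaussianPDFReal 0 1 z) : ℝ≥0) : ℝ≥0∞) := by
    rw [gaussianReal_of_var_ne_zero 0 one_ne_zero]
    rfl
  have hmeas : Measurable fun z => Real.toNNReal (gaussianPDFReal 0 1 z) :=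
    (measurable_gaussianPDFReal 0 1).real_toNNReal
  rw [hmap, integral_withDensity_eq_integral_smul hmeas]
  -- step 2: rewrite the integrand as h₁ + h₂
  have hsplit : (fun z => Real.toNNReal (gaussianPDFReal 0 1 z) • softThresh z x ^ 2)
      = fun z => h₁ z + h₂ z := by
    funext z
    rw [NNReal.smul_def, Real.coe_toNNReal _ (gaussianPDFReal_nonneg 0 1 z), smul_eq_mul, hpdf, hh₁, hh₂]
    simp only
    rw [softThresh]
    rcases lt_trichotomy x z with h | h | h
    · rw [if_pos h, max_eq_left (by linarith), max_eq_right (by linarith)]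
      ring
    · subst h
      rw [if_neg (lt_irrefl _), if_neg (by linarith)]
      rw [max_eq_right (by linarith), max_eq_right (by linarith)]
      ring
    · rw [if_neg (by linarith), max_eq_right (by linarith)]
      by_cases h' : z < -x
      · rw [if_pos h', max_eq_left (by linarith)]
        ring
      · rw [if_neg h', max_eq_right (by push_neg at h'; linarith)]
        ring
  rw [hsplit]
  -- step 3: integrability
  have hb₁ : ∀ (a : ℝ), ∀ z : ℝ, ‖max (z - a) 0 ^ 2 * stdGaussPDF z‖ ≤
      ‖(z + (-a)) ^ 2 * stdGaussPDF z‖ := by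
    intro a z
    rw [Real.norm_eq_abs, Real.norm_eq_abs,
      abs_of_nonneg (mul_nonneg (by positivity) (stdGaussPDF_nonneg z)),
      abs_of_nonneg (mul_nonneg (by positivity) (stdGaussPDF_nonneg z))]
    have h1 : max (z - a) 0 ^ 2 ≤ (z - a) ^ 2 := by
      have := max_le (le_abs_self (z - a)) (abs_nonneg (z - a))
      calc max (z - a) 0 ^ 2 ≤ |z - a| ^ 2 := by
            exact pow_le_pow_left₀ (le_max_right _ _) this 2
        _ = (z - a) ^ 2 := sq_abs _
    have : (z + -a) = z - a := by ring
    rw [this]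
    exact mul_le_mul_of_nonneg_right h1 (stdGaussPDF_nonneg z)
  have hc₁ : Continuous h₁ := by
    refine Continuous.mul ?_ continuous_stdGaussPDF
    exact ((continuous_id.sub continuous_const).max continuous_const).pow 2
  have hc₂ : Continuous h₂ := by
    refine Continuous.mul ?_ continuous_stdGaussPDF
    exact ((continuous_id.neg.sub continuous_const).max continuous_const).pow 2
  have hi₁ : Integrable h₁ :=
    (integrable_sq_shift (-x)).mono hc₁.aestronglyMeasurable
      (Filter.Eventually.of_forall fun z => hb₁ x z)
  have hi₂ : Integrable h₂ := by
    refine (integrable_sq_shift x).mono hc₂.aestronglyMeasurable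
      (Filter.Eventually.of_forall fun z => ?_)
    simp only [hh₂]
    calc ‖max (-z - x) 0 ^ 2 * stdGaussPDF z‖
        = ‖max (-z - x) 0 ^ 2 * stdGaussPDF (-z)‖ := by rw [stdGaussPDF_neg]
      _ ≤ ‖(-z + -x) ^ 2 * stdGaussPDF (-z)‖ := hb₁ x (-z)
      _ = ‖(z + x) ^ 2 * stdGaussPDF z‖ := by
          rw [stdGaussPDF_neg]
          congr 1
          ring
  rw [integral_add hi₁ hi₂]
  -- step 4: ∫ h₂ = ∫ h₁
  have hsym : ∫ z, h₂ z = ∫ z, h₁ z := by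
    have : h₂ = fun z => h₁ (-z) := by
      funext z
      simp only [hh₁, hh₂, neg_neg, stdGaussPDF_neg]
    rw [this, integral_neg_eq_self]
  rw [hsym, ← two_mul]
  -- step 5: compute ∫ h₁
  have hIic : ∫ z in Iic x, h₁ z = 0 := by
    rw [setIntegral_congr_fun measurableSet_Iic (g := fun _ => (0:ℝ))]
    · simp
    · intro z hz
      simp only [hh₁]
      rw [max_eq_right (by simp at hz; linarith)]
      ring
  have hIoi : ∫ z in Ioi x, h₁ z = ∫ z in Iic (-x), (z + x) ^ 2 * stdGaussPDF z := by
    rw [setIntegral_congr_fun measurableSet_Ioi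
      (g := fun z => (fun w => (w + x) ^ 2 * stdGaussPDF w) (-z))]
    · simpa using integral_comp_neg_Ioi x (fun w => (w + x) ^ 2 * stdGaussPDF w)
    · intro z hz
      simp only [hh₁, stdGaussPDF_neg]
      rw [max_eq_left (by simp at hz; linarith)]
      ring_nf
  have htot : ∫ z, h₁ z = ∫ z in Iic (-x), (z + x) ^ 2 * stdGaussPDF z := by
    rw [← intervalIntegral.integral_Iic_add_Ioi hi₁.integrableOn hi₁.integrableOn, hIic, hIoi, zero_add]
  rw [htot, key_integral x hx]
end

section
/- For a standard Gaussian Z, E[η_soft(Z; x)²] is strictly decreasing in x on [0, ∞), where η_soft is soft-thresholding with threshold x. -/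
open MeasureTheory ProbabilityTheory

lemma softThresh_measurable (x : ℝ) : Measurable (fun z : ℝ => softThresh z x) := by
  unfold softThresh
  exact Measurable.ite (measurableSet_lt measurable_const measurable_id)
    (measurable_id.sub measurable_const)
    (Measurable.ite (measurableSet_lt measurable_id measurable_const)
      (measurable_id.add measurable_const) measurable_const)

lemma softThresh_sq_le_sq {x : ℝ} (hx : 0 ≤ x) (z : ℝ) : (softThresh z x) ^ 2 ≤ z ^ 2 := by
  unfold softThresh
  split_ifs <;> nlinarith

lemma softThresh_sq_anti {x y : ℝ} (hx : 0 ≤ x) (hxy : x ≤ y) (z : ℝ) :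
    (softThresh z y) ^ 2 ≤ (softThresh z x) ^ 2 := by
  unfold softThresh
  split_ifs <;> nlinarith

lemma softThresh_sq_lt {x y z : ℝ} (hx : 0 ≤ x) (hxy : x < y) (hz : y < z) :
    (softThresh z y) ^ 2 < (softThresh z x) ^ 2 := by
  unfold softThresh
  split_ifs <;> nlinarith

lemma integrable_sq_gauss : Integrable (fun z : ℝ => z ^ 2) (gaussianReal 0 1) := by
  rw [gaussianReal_of_var_ne_zero 0 one_ne_zero,
    integrable_withDensity_iff (measurable_gaussianPDF 0 1)
      (Filter.Eventually.of_forall fun z => ENNReal.ofReal_lt_top)]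
  have heq : ∀ z : ℝ, z ^ 2 * (gaussianPDF 0 1 z).toReal
      = (√(2 * Real.pi))⁻¹ * (z ^ (2 : ℝ) * Real.exp (-(1/2) * z ^ 2)) := by
    intro z
    rw [gaussianPDF, ENNReal.toReal_ofReal (gaussianPDFReal_nonneg 0 1 z), gaussianPDFReal,
      Real.rpow_two]
    push_cast
    ring_nf
  simp only [heq]
  exact (integrable_rpow_mul_exp_neg_mul_sq (by norm_num) (by norm_num)).const_mul _

lemma integrable_softThresh_sq {x : ℝ} (hx : 0 ≤ x) :
    Integrable (fun z : ℝ => (softThresh z x) ^ 2) (gaussianReal 0 1) := by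
  refine Integrable.mono' integrable_sq_gauss
    (((softThresh_measurable x).pow_const 2).aestronglyMeasurable)
    (Filter.Eventually.of_forall fun z => ?_)
  rw [Real.norm_eq_abs, abs_of_nonneg (sq_nonneg _)]
  exact softThresh_sq_le_sq hx z

/-- For a standard Gaussian Z, the map x ↦ E[η_soft(Z;x)²] is strictly decreasing
on [0, ∞). -/
theorem expectation_softThresh_sq_strictAnti :
    StrictAntiOn (fun x : ℝ => ∫ z, (softThresh z x) ^ 2 ∂(gaussianReal 0 1))
      (Set.Ici 0) := by
  intro x hx y hy hxy
  simp only [Set.mem_Ici] at hx hy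
  have hintx := integrable_softThresh_sq hx
  have hinty := integrable_softThresh_sq hy
  have key : 0 < ∫ z, ((softThresh z x) ^ 2 - (softThresh z y) ^ 2) ∂(gaussianReal 0 1) := by
    rw [integral_pos_iff_support_of_nonneg
      (fun z => sub_nonneg.mpr (softThresh_sq_anti hx hxy.le z)) (hintx.sub hinty)]
    have hsupp : Set.Ioi y ⊆ Function.support
        (fun z => (softThresh z x) ^ 2 - (softThresh z y) ^ 2) :=
      fun z hz => sub_ne_zero.mpr (ne_of_gt (softThresh_sq_lt hx hxy hz))
    have hpos : 0 < gaussianReal 0 1 (Set.Ioi y) := by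
      refine lt_of_le_of_ne zero_le (Ne.symm fun h0 => ?_)
      have := (gaussianReal_absolutelyContinuous' 0 one_ne_zero) h0
      simp [Real.volume_Ioi] at this
    exact hpos.trans_le (measure_mono hsupp)
  rw [integral_sub hintx hinty] at key
  linarith
end

section
/- If ε' ≤ ε*/ε with 0 < ε* < ε < 1 and κ ∈ [0,1), then (1-ε')(κ - εε')/(1-εε') + ε' ≤ 1 - (1-κ)(ε-ε*)/(ε(1-ε*)). -/
/-- If ε' ≤ ε*/ε with 0 < ε* < ε < 1 and κ ∈ [0,1), then
(1-ε')(κ - εε')/(1-εε') + ε' ≤ 1 - (1-κ)(ε-ε*)/(ε(1-ε*)). -/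
theorem tpp_bound_below_ustar (ε εs ε' κ : ℝ)
    (h0 : 0 < εs) (h1 : εs < ε) (h2 : ε < 1)
    (hε'0 : 0 ≤ ε') (hε' : ε' ≤ εs / ε) (hκ0 : 0 ≤ κ) (hκ1 : κ < 1) :
    (1 - ε') * (κ - ε * ε') / (1 - ε * ε') + ε' ≤
      1 - (1 - κ) * (ε - εs) / (ε * (1 - εs)) := by
  have hε : 0 < ε := lt_trans h0 h1
  have hεε' : ε * ε' ≤ εs := by
    rw [le_div_iff₀ hε] at hε'; nlinarith
  have hd : 0 < 1 - ε * ε' := by nlinarith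
  have hd2 : 0 < ε * (1 - εs) := by nlinarith
  have heq : (1 - ε') * (κ - ε * ε') / (1 - ε * ε') + ε'
      = 1 - (1 - κ) * (1 - ε') / (1 - ε * ε') := by
    rw [div_add' _ _ _ hd.ne', eq_sub_iff_add_eq, ← add_div, div_eq_one_iff_eq hd.ne']
    ring
  have key : (1 - κ) * (ε - εs) / (ε * (1 - εs)) ≤ (1 - κ) * (1 - ε') / (1 - ε * ε') := by
    rw [div_le_div_iff₀ hd2 hd]
    nlinarith [mul_nonneg (mul_nonneg (sub_nonneg.2 hεε') (sub_pos.2 h2).le)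
      (sub_pos.2 hκ1).le]
  linarith [heq, key]
end

section
/- Let L be a bounded linear functional constraint problem: minimize ∫ c(t)ρ(t)dt over probability densities ρ ≥ 0 on [0,∞) subject to ∫ρ = 1 and ∫h(t)ρ(t)dt = u for continuous h. Then any extreme point of the feasible set is a mixture of at most two Dirac point masses. -/
open MeasureTheory
open scoped ENNReal

/-- A probability measure on [0,∞) satisfying the linear constraint ∫ h dρ = u. -/
def FeasibleMeasure (h : ℝ → ℝ) (u : ℝ) (ρ : Measure ℝ) : Prop :=
  IsProbabilityMeasure ρ ∧ ρ (Set.Iio 0) = 0 ∧ ∫ t, h t ∂ρ = u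

lemma aux_exists_x (m₁ m₂ m₃ H₁ H₂ H₃ : ℝ) (hm₁ : 0 < m₁) (hm₂ : 0 < m₂) (hm₃ : 0 < m₃) :
    ∃ x₁ x₂ x₃ : ℝ, (x₁ ≠ 0 ∨ x₂ ≠ 0 ∨ x₃ ≠ 0) ∧ |x₁| ≤ 1 ∧ |x₂| ≤ 1 ∧ |x₃| ≤ 1 ∧
      x₁*m₁ + x₂*m₂ + x₃*m₃ = 0 ∧ x₁*H₁ + x₂*H₂ + x₃*H₃ = 0 := by
  set r₁ := H₁/m₁; set r₂ := H₂/m₂; set r₃ := H₃/m₃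
  obtain ⟨y₁, y₂, y₃, hy0, hys, hyr⟩ :
      ∃ y₁ y₂ y₃ : ℝ, (y₁ ≠ 0 ∨ y₂ ≠ 0 ∨ y₃ ≠ 0) ∧ y₁+y₂+y₃ = 0 ∧ y₁*r₁+y₂*r₂+y₃*r₃ = 0 := by
    by_cases h : r₁ = r₂
    · exact ⟨1, -1, 0, Or.inl one_ne_zero, by ring, by rw [h]; ring⟩
    · exact ⟨r₂-r₃, r₃-r₁, r₁-r₂, Or.inr (Or.inr (sub_ne_zero.2 h)), by ring, by ring⟩
  set S : ℝ := 1 + |y₁/m₁| + |y₂/m₂| + |y₃/m₃| with hS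
  have hSpos : 0 < S := by positivity
  set ε : ℝ := S⁻¹ with hε
  have hεpos : 0 < ε := by positivity
  refine ⟨ε*(y₁/m₁), ε*(y₂/m₂), ε*(y₃/m₃), ?_, ?_, ?_, ?_, ?_, ?_⟩
  · rcases hy0 with h|h|h
    · exact Or.inl (by positivity)
    · exact Or.inr (Or.inl (by positivity))
    · exact Or.inr (Or.inr (by positivity))
  · rw [abs_mul, abs_of_pos hεpos, hε, inv_mul_le_iff₀ hSpos, mul_one, hS]
    have := abs_nonneg (y₂/m₂); have := abs_nonneg (y₃/m₃); linarith
  · rw [abs_mul, abs_of_pos hεpos, hε, inv_mul_le_iff₀ hSpos, mul_one, hS]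
    have := abs_nonneg (y₁/m₁); have := abs_nonneg (y₃/m₃); linarith
  · rw [abs_mul, abs_of_pos hεpos, hε, inv_mul_le_iff₀ hSpos, mul_one, hS]
    have := abs_nonneg (y₁/m₁); have := abs_nonneg (y₂/m₂); linarith
  · have : ε*(y₁/m₁)*m₁ + ε*(y₂/m₂)*m₂ + ε*(y₃/m₃)*m₃ = ε*(y₁+y₂+y₃) := by
      field_simp
    rw [this, hys, mul_zero]
  · have : ε*(y₁/m₁)*H₁ + ε*(y₂/m₂)*H₂ + ε*(y₃/m₃)*H₃ = ε*(y₁*r₁+y₂*r₂+y₃*r₃) := by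
      simp only [r₁, r₂, r₃]; field_simp
    rw [this, hyr, mul_zero]

lemma aux_half_split (p a b c c₁ c₂ c₃ d₁ d₂ d₃ : ℝ≥0∞) (h₁ : c₁+d₁ = 2) (h₂ : c₂+d₂ = 2)
    (h₃ : c₃+d₃ = 2) :
    2⁻¹*(p+(c₁*a+(c₂*b+c₃*c))) + 2⁻¹*(p+(d₁*a+(d₂*b+d₃*c))) = p+(a+(b+c)) := by
  have h2 : (2:ℝ≥0∞)⁻¹*2 = 1 := ENNReal.inv_mul_cancel two_ne_zero (by norm_num)
  calc 2⁻¹*(p+(c₁*a+(c₂*b+c₃*c))) + 2⁻¹*(p+(d₁*a+(d₂*b+d₃*c)))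
      = (2⁻¹*2)*p + ((2⁻¹*(c₁+d₁))*a + ((2⁻¹*(c₂+d₂))*b + (2⁻¹*(c₃+d₃))*c)) := by ring
    _ = p+(a+(b+c)) := by rw [h₁, h₂, h₃, h2]; ring

lemma aux_compl_supp (ρ : Measure ℝ) :
    ρ {t : ℝ | ∀ U : Set ℝ, IsOpen U → t ∈ U → 0 < ρ U}ᶜ = 0 := by
  obtain ⟨T, hTc, hTsub, hTeq⟩ :=
    TopologicalSpace.isOpen_sUnion_countable {U : Set ℝ | IsOpen U ∧ ρ U = 0}
      (fun U hU => hU.1)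
  have hsub : {t : ℝ | ∀ U : Set ℝ, IsOpen U → t ∈ U → 0 < ρ U}ᶜ ⊆ ⋃₀ T := by
    rw [hTeq]
    intro t ht
    simp only [Set.mem_compl_iff, Set.mem_setOf_eq, not_forall] at ht
    obtain ⟨U, hUo, htU, hpos⟩ := ht
    exact ⟨U, ⟨hUo, le_antisymm (not_lt.1 hpos) zero_le⟩, htU⟩
  exact measure_mono_null hsub ((measure_sUnion_null_iff hTc).2 fun s hs => (hTsub hs).2)

lemma aux_two_point (ρ : Measure ℝ) [IsProbabilityMeasure ρ] (t₁ t₂ : ℝ)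
    (hc : ρ ({t₁, t₂} : Set ℝ)ᶜ = 0) :
    ∃ p : ℝ≥0∞, p ≤ 1 ∧ ρ = p • Measure.dirac t₁ + (1 - p) • Measure.dirac t₂ := by
  set p := ρ {t₁} with hp
  have hple : p ≤ 1 := prob_le_one
  have hA : MeasurableSet ({t₁, t₂} : Set ℝ) := (Set.toFinite _).measurableSet
  have h12 : ρ ({t₁, t₂} : Set ℝ) = 1 := by
    have := measure_add_measure_compl (μ := ρ) hA
    rw [hc, add_zero, measure_univ] at this; exact this
  refine ⟨p, hple, ?_⟩
  ext s hs
  have hρs : ρ s = ρ (s ∩ {t₁, t₂}) := by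
    have := measure_inter_add_diff (μ := ρ) s hA
    have h0 : ρ (s \ {t₁, t₂}) = 0 :=
      measure_mono_null (fun x hx => hx.2) hc
    rw [h0, add_zero] at this; exact this.symm
  rw [Measure.add_apply, Measure.smul_apply, Measure.smul_apply, smul_eq_mul, smul_eq_mul,
    Measure.dirac_apply' _ hs, Measure.dirac_apply' _ hs]
  by_cases h1 : t₁ ∈ s <;> by_cases h2 : t₂ ∈ s
  · have : s ∩ {t₁, t₂} = {t₁, t₂} := by
      apply Set.inter_eq_right.2; intro x hx; rcases hx with rfl|rfl
      exacts [h1, (by simpa using h2)]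
    rw [hρs, this, h12]
    simp [Set.indicator, h1, h2, add_tsub_cancel_of_le hple]
  · have hne : t₁ ≠ t₂ := fun h => h2 (h ▸ h1)
    have : s ∩ {t₁, t₂} = {t₁} := by
      ext x; constructor
      · rintro ⟨hxs, hx⟩
        rcases hx with rfl|rfl
        · rfl
        · exact absurd hxs h2
      · rintro rfl; exact ⟨h1, Or.inl rfl⟩
    rw [hρs, this]
    simp [Set.indicator, h1, h2, ← hp]
  · have hne : t₁ ≠ t₂ := fun h => h1 (h ▸ h2)
    have hsplit : ρ {t₁} + ρ {t₂} = 1 := by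
      rw [← measure_union (by simpa using hne) (measurableSet_singleton t₂)]
      rw [Set.pair_comm] at h12; simpa using h12
    have ht2 : ρ {t₂} = 1 - p := by
      rw [hp]; exact ENNReal.eq_sub_of_add_eq (measure_ne_top ρ _) (by rw [add_comm]; exact hsplit)
    have : s ∩ {t₁, t₂} = {t₂} := by
      ext x; constructor
      · rintro ⟨hxs, hx⟩
        rcases hx with rfl|rfl
        · exact absurd hxs h1
        · rfl
      · rintro rfl; exact ⟨h2, Or.inr rfl⟩
    rw [hρs, this, ht2]
    simp [Set.indicator, h1, h2]
  · have : s ∩ {t₁, t₂} = ∅ := by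
      ext x; simp only [Set.mem_inter_iff, Set.mem_empty_iff_false, iff_false]
      rintro ⟨hxs, rfl|rfl⟩; exacts [h1 hxs, h2 hxs]
    rw [hρs, this, measure_empty]
    simp [Set.indicator, h1, h2]

set_option maxHeartbeats 1000000 in
lemma aux_three_point (h : ℝ → ℝ) (u : ℝ)
    (hcont : Continuous h) (hrange : ∀ t, h t ∈ Set.Icc (0 : ℝ) 1)
    (ρ : Measure ℝ) (hρ : FeasibleMeasure h u ρ)
    (hext : ∀ ρ₁ ρ₂ : Measure ℝ, FeasibleMeasure h u ρ₁ → FeasibleMeasure h u ρ₂ →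
      ∀ a : ℝ≥0∞, 0 < a → a < 1 → ρ = a • ρ₁ + (1 - a) • ρ₂ → ρ₁ = ρ₂)
    (a b c : ℝ) (hab : a ≠ b) (hac : a ≠ c) (hbc : b ≠ c)
    (ha : ∀ U : Set ℝ, IsOpen U → a ∈ U → 0 < ρ U)
    (hb : ∀ U : Set ℝ, IsOpen U → b ∈ U → 0 < ρ U)
    (hc : ∀ U : Set ℝ, IsOpen U → c ∈ U → 0 < ρ U) : False := by
  obtain ⟨hprob, hIio, hintρ⟩ := hρ
  haveI := hprob
  haveI : IsFiniteMeasure ρ := ⟨by rw [hprob.measure_univ]; exact ENNReal.one_lt_top⟩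
  -- disjoint balls around a b c
  set δ : ℝ := min (min (dist a b) (dist a c)) (dist b c) / 3 with hδdef
  have hdab : 0 < dist a b := dist_pos.2 hab
  have hdac : 0 < dist a c := dist_pos.2 hac
  have hdbc : 0 < dist b c := dist_pos.2 hbc
  have hδ : 0 < δ := by
    have := lt_min (lt_min hdab hdac) hdbc
    simp only [hδdef]; positivity
  have hδab : δ + δ ≤ dist a b := by
    have h1 : min (min (dist a b) (dist a c)) (dist b c) ≤ dist a b :=
      le_trans (min_le_left _ _) (min_le_left _ _)
    have h2 : 0 < min (min (dist a b) (dist a c)) (dist b c) := lt_min (lt_min hdab hdac) hdbc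
    rw [hδdef]; linarith
  have hδac : δ + δ ≤ dist a c := by
    have h1 : min (min (dist a b) (dist a c)) (dist b c) ≤ dist a c :=
      le_trans (min_le_left _ _) (min_le_right _ _)
    have h2 : 0 < min (min (dist a b) (dist a c)) (dist b c) := lt_min (lt_min hdab hdac) hdbc
    rw [hδdef]; linarith
  have hδbc : δ + δ ≤ dist b c := by
    have h1 : min (min (dist a b) (dist a c)) (dist b c) ≤ dist b c := min_le_right _ _
    have h2 : 0 < min (min (dist a b) (dist a c)) (dist b c) := lt_min (lt_min hdab hdac) hdbc
    rw [hδdef]; linarith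
  set U₁ : Set ℝ := Metric.ball a δ with hU₁def
  set U₂ : Set ℝ := Metric.ball b δ with hU₂def
  set U₃ : Set ℝ := Metric.ball c δ with hU₃def
  have hd₁₂ : Disjoint U₁ U₂ := Metric.ball_disjoint_ball hδab
  have hd₁₃ : Disjoint U₁ U₃ := Metric.ball_disjoint_ball hδac
  have hd₂₃ : Disjoint U₂ U₃ := Metric.ball_disjoint_ball hδbc
  have hU₁m : MeasurableSet U₁ := Metric.isOpen_ball.measurableSet
  have hU₂m : MeasurableSet U₂ := Metric.isOpen_ball.measurableSet
  have hU₃m : MeasurableSet U₃ := Metric.isOpen_ball.measurableSet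
  have hρ₁ : 0 < ρ U₁ := ha _ Metric.isOpen_ball (Metric.mem_ball_self hδ)
  have hρ₂ : 0 < ρ U₂ := hb _ Metric.isOpen_ball (Metric.mem_ball_self hδ)
  have hρ₃ : 0 < ρ U₃ := hc _ Metric.isOpen_ball (Metric.mem_ball_self hδ)
  set m₁ : ℝ := (ρ U₁).toReal with hm₁def
  set m₂ : ℝ := (ρ U₂).toReal with hm₂def
  set m₃ : ℝ := (ρ U₃).toReal with hm₃def
  have hm₁ : 0 < m₁ := ENNReal.toReal_pos hρ₁.ne' (measure_ne_top ρ _)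
  have hm₂ : 0 < m₂ := ENNReal.toReal_pos hρ₂.ne' (measure_ne_top ρ _)
  have hm₃ : 0 < m₃ := ENNReal.toReal_pos hρ₃.ne' (measure_ne_top ρ _)
  set H₁ : ℝ := ∫ t in U₁, h t ∂ρ with hH₁def
  set H₂ : ℝ := ∫ t in U₂, h t ∂ρ with hH₂def
  set H₃ : ℝ := ∫ t in U₃, h t ∂ρ with hH₃def
  obtain ⟨x₁, x₂, x₃, hx0, hxb₁, hxb₂, hxb₃, hxm, hxH⟩ :=
    aux_exists_x m₁ m₂ m₃ H₁ H₂ H₃ hm₁ hm₂ hm₃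
  have hx₁l := abs_le.1 hxb₁
  have hx₂l := abs_le.1 hxb₂
  have hx₃l := abs_le.1 hxb₃
  -- partition of ρ
  set W : Set ℝ := U₁ ∪ U₂ ∪ U₃ with hWdef
  have hWm : MeasurableSet W := (hU₁m.union hU₂m).union hU₃m
  have hinter : ∀ s : Set ℝ, MeasurableSet s →
      ρ s = ρ (s ∩ Wᶜ) + (ρ (s ∩ U₁) + (ρ (s ∩ U₂) + ρ (s ∩ U₃))) := by
    intro s hs
    have h1 : ρ (s ∩ W) + ρ (s \ W) = ρ s := measure_inter_add_diff s hWm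
    have h2 : s ∩ W = (s ∩ U₁) ∪ ((s ∩ U₂) ∪ (s ∩ U₃)) := by
      rw [hWdef, Set.union_assoc, Set.inter_union_distrib_left, Set.inter_union_distrib_left]
    have h3 : ρ (s ∩ W) = ρ (s ∩ U₁) + (ρ (s ∩ U₂) + ρ (s ∩ U₃)) := by
      rw [h2, measure_union (Disjoint.union_right
          (hd₁₂.mono Set.inter_subset_right Set.inter_subset_right)
          (hd₁₃.mono Set.inter_subset_right Set.inter_subset_right))
          ((hs.inter hU₂m).union (hs.inter hU₃m)),
        measure_union (hd₂₃.mono Set.inter_subset_right Set.inter_subset_right) (hs.inter hU₃m)]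
    rw [← h1, h3, Set.diff_eq]
    ring
  have hpart : ρ = ρ.restrict Wᶜ +
      (ρ.restrict U₁ + (ρ.restrict U₂ + ρ.restrict U₃)) := by
    ext s hs
    rw [Measure.add_apply, Measure.add_apply, Measure.add_apply,
      Measure.restrict_apply hs, Measure.restrict_apply hs, Measure.restrict_apply hs,
      Measure.restrict_apply hs]
    exact hinter s hs
  -- integrability of h against any finite measure
  have hIntble : ∀ μ : Measure ℝ, IsFiniteMeasure μ → Integrable h μ := by
    intro μ hμ
    refine (integrable_const (1:ℝ)).mono' hcont.aestronglyMeasurable ?_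
    filter_upwards with t
    rw [Real.norm_eq_abs]
    exact abs_le.2 ⟨by linarith [(hrange t).1], (hrange t).2⟩
  -- coefficients
  set c₁p : ℝ≥0∞ := ENNReal.ofReal (1 + x₁) with hc₁p
  set c₂p : ℝ≥0∞ := ENNReal.ofReal (1 + x₂) with hc₂p
  set c₃p : ℝ≥0∞ := ENNReal.ofReal (1 + x₃) with hc₃p
  set c₁m : ℝ≥0∞ := ENNReal.ofReal (1 - x₁) with hc₁m
  set c₂m : ℝ≥0∞ := ENNReal.ofReal (1 - x₂) with hc₂m
  set c₃m : ℝ≥0∞ := ENNReal.ofReal (1 - x₃) with hc₃m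
  have hsum₁ : c₁p + c₁m = 2 := by
    rw [hc₁p, hc₁m, ← ENNReal.ofReal_add (by linarith) (by linarith)]
    norm_num
  have hsum₂ : c₂p + c₂m = 2 := by
    rw [hc₂p, hc₂m, ← ENNReal.ofReal_add (by linarith) (by linarith)]
    norm_num
  have hsum₃ : c₃p + c₃m = 2 := by
    rw [hc₃p, hc₃m, ← ENNReal.ofReal_add (by linarith) (by linarith)]
    norm_num
  -- the two perturbed measures
  set ν₁ : Measure ℝ := ρ.restrict Wᶜ +
      (c₁p • ρ.restrict U₁ + (c₂p • ρ.restrict U₂ + c₃p • ρ.restrict U₃)) with hν₁def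
  set ν₂ : Measure ℝ := ρ.restrict Wᶜ +
      (c₁m • ρ.restrict U₁ + (c₂m • ρ.restrict U₂ + c₃m • ρ.restrict U₃)) with hν₂def
  have hν₁app : ∀ s : Set ℝ, MeasurableSet s →
      ν₁ s = ρ (s ∩ Wᶜ) + (c₁p * ρ (s ∩ U₁) + (c₂p * ρ (s ∩ U₂) + c₃p * ρ (s ∩ U₃))) := by
    intro s hs
    simp [hν₁def, Measure.add_apply, Measure.smul_apply, Measure.restrict_apply hs, smul_eq_mul]
  have hν₂app : ∀ s : Set ℝ, MeasurableSet s →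
      ν₂ s = ρ (s ∩ Wᶜ) + (c₁m * ρ (s ∩ U₁) + (c₂m * ρ (s ∩ U₂) + c₃m * ρ (s ∩ U₃))) := by
    intro s hs
    simp [hν₂def, Measure.add_apply, Measure.smul_apply, Measure.restrict_apply hs, smul_eq_mul]
  -- mass identity in ℝ
  have hmass : (ρ Wᶜ).toReal + (m₁ + (m₂ + m₃)) = 1 := by
    have h1 : ρ Wᶜ + (ρ U₁ + (ρ U₂ + ρ U₃)) = 1 := by
      have := hinter Set.univ MeasurableSet.univ
      simpa [Set.univ_inter, measure_univ] using this.symm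
    have := congrArg ENNReal.toReal h1
    rw [ENNReal.toReal_add (measure_ne_top ρ _) (by
        exact ENNReal.add_ne_top.2 ⟨measure_ne_top ρ _,
          ENNReal.add_ne_top.2 ⟨measure_ne_top ρ _, measure_ne_top ρ _⟩⟩),
      ENNReal.toReal_add (measure_ne_top ρ _)
        (ENNReal.add_ne_top.2 ⟨measure_ne_top ρ _, measure_ne_top ρ _⟩),
      ENNReal.toReal_add (measure_ne_top ρ _) (measure_ne_top ρ _)] at this
    simpa [hm₁def, hm₂def, hm₃def] using this
  -- integral identity in ℝ
  have hintsum : ∫ t in Wᶜ, h t ∂ρ + (H₁ + (H₂ + H₃)) = u := by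
    have h1 : ∫ t, h t ∂(ρ.restrict Wᶜ +
        (ρ.restrict U₁ + (ρ.restrict U₂ + ρ.restrict U₃))) = u := by
      rw [← hpart]; exact hintρ
    rw [integral_add_measure (hIntble _ inferInstance) (hIntble _ inferInstance),
      integral_add_measure (hIntble _ inferInstance) (hIntble _ inferInstance),
      integral_add_measure (hIntble _ inferInstance) (hIntble _ inferInstance)] at h1
    exact h1
  -- finiteness of smul pieces
  have hfinsmul : ∀ (r : ℝ) (U : Set ℝ), IsFiniteMeasure (ENNReal.ofReal r • ρ.restrict U) := by
    intro r U
    refine ⟨?_⟩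
    rw [Measure.smul_apply, smul_eq_mul]
    exact ENNReal.mul_lt_top ENNReal.ofReal_lt_top (measure_lt_top _ _)
  have hfinadd : ∀ μ ν : Measure ℝ, IsFiniteMeasure μ → IsFiniteMeasure ν →
      IsFiniteMeasure (μ + ν) := by
    intro μ ν hμ hν
    exact ⟨by
      rw [Measure.add_apply]
      exact ENNReal.add_lt_top.2 ⟨hμ.measure_univ_lt_top, hν.measure_univ_lt_top⟩⟩
  -- feasibility of a perturbed measure (generic in the signs)
  have hfeas : ∀ z₁ z₂ z₃ : ℝ, -1 ≤ z₁ → z₁ ≤ 1 → -1 ≤ z₂ → z₂ ≤ 1 → -1 ≤ z₃ → z₃ ≤ 1 →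
      z₁*m₁ + z₂*m₂ + z₃*m₃ = 0 → z₁*H₁ + z₂*H₂ + z₃*H₃ = 0 →
      FeasibleMeasure h u (ρ.restrict Wᶜ +
        (ENNReal.ofReal (1+z₁) • ρ.restrict U₁ +
          (ENNReal.ofReal (1+z₂) • ρ.restrict U₂ + ENNReal.ofReal (1+z₃) • ρ.restrict U₃))) := by
    intro z₁ z₂ z₃ hz₁l hz₁u hz₂l hz₂u hz₃l hz₃u hzm hzH
    haveI : IsFiniteMeasure ρ := ⟨by rw [hprob.measure_univ]; exact ENNReal.one_lt_top⟩
    have h0₁ : (0:ℝ) ≤ 1 + z₁ := by linarith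
    have h0₂ : (0:ℝ) ≤ 1 + z₂ := by linarith
    have h0₃ : (0:ℝ) ≤ 1 + z₃ := by linarith
    have hp₁ : (0:ℝ) ≤ (1+z₁)*m₁ := mul_nonneg h0₁ hm₁.le
    have hp₂ : (0:ℝ) ≤ (1+z₂)*m₂ := mul_nonneg h0₂ hm₂.le
    have hp₃ : (0:ℝ) ≤ (1+z₃)*m₃ := mul_nonneg h0₃ hm₃.le
    set ν : Measure ℝ := ρ.restrict Wᶜ +
        (ENNReal.ofReal (1+z₁) • ρ.restrict U₁ +
          (ENNReal.ofReal (1+z₂) • ρ.restrict U₂ + ENNReal.ofReal (1+z₃) • ρ.restrict U₃))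
      with hνdef
    have happ : ∀ s : Set ℝ, MeasurableSet s →
        ν s = ρ (s ∩ Wᶜ) + (ENNReal.ofReal (1+z₁) * ρ (s ∩ U₁) +
          (ENNReal.ofReal (1+z₂) * ρ (s ∩ U₂) + ENNReal.ofReal (1+z₃) * ρ (s ∩ U₃))) := by
      intro s hs
      simp [hνdef, Measure.add_apply, Measure.smul_apply, Measure.restrict_apply hs, smul_eq_mul]
    refine ⟨⟨?_⟩, ?_, ?_⟩
    · -- total mass 1
      have := happ Set.univ MeasurableSet.univ
      simp only [Set.univ_inter] at this
      rw [this]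
      have e₀ : ρ Wᶜ = ENNReal.ofReal (ρ Wᶜ).toReal :=
        (ENNReal.ofReal_toReal (measure_ne_top ρ _)).symm
      have e₁ : ρ U₁ = ENNReal.ofReal m₁ :=
        (ENNReal.ofReal_toReal (measure_ne_top ρ _)).symm
      have e₂ : ρ U₂ = ENNReal.ofReal m₂ :=
        (ENNReal.ofReal_toReal (measure_ne_top ρ _)).symm
      have e₃ : ρ U₃ = ENNReal.ofReal m₃ :=
        (ENNReal.ofReal_toReal (measure_ne_top ρ _)).symm
      rw [e₀, e₁, e₂, e₃,
        ← ENNReal.ofReal_mul h0₁, ← ENNReal.ofReal_mul h0₂,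
        ← ENNReal.ofReal_mul h0₃,
        ← ENNReal.ofReal_add hp₂ hp₃,
        ← ENNReal.ofReal_add hp₁ (add_nonneg hp₂ hp₃),
        ← ENNReal.ofReal_add ENNReal.toReal_nonneg (add_nonneg hp₁ (add_nonneg hp₂ hp₃))]
      have : (ρ Wᶜ).toReal + ((1+z₁)*m₁ + ((1+z₂)*m₂ + (1+z₃)*m₃)) = 1 := by
        have := hmass; linarith [hzm, mul_comm z₁ m₁]
      rw [this, ENNReal.ofReal_one]
    · -- vanishing on Iio 0
      rw [happ _ measurableSet_Iio]
      have hz : ∀ V : Set ℝ, ρ (Set.Iio 0 ∩ V) = 0 :=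
        fun V => measure_mono_null Set.inter_subset_left hIio
      rw [hz, hz, hz, hz]
      simp
    · -- integral = u
      have hres : IsFiniteMeasure (ρ.restrict Wᶜ) := isFiniteMeasureRestrict ρ Wᶜ
      rw [hνdef, integral_add_measure (hIntble (ρ.restrict Wᶜ) hres)
          (hIntble _ (hfinadd _ _ (hfinsmul _ _)
            (hfinadd _ _ (hfinsmul _ _) (hfinsmul _ _)))),
        integral_add_measure (hIntble _ (hfinsmul _ _))
          (hIntble _ (hfinadd _ _ (hfinsmul _ _) (hfinsmul _ _))),
        integral_add_measure (hIntble _ (hfinsmul _ _)) (hIntble _ (hfinsmul _ _)),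
        integral_smul_measure, integral_smul_measure, integral_smul_measure,
        ENNReal.toReal_ofReal h0₁, ENNReal.toReal_ofReal h0₂,
        ENNReal.toReal_ofReal h0₃]
      simp only [smul_eq_mul]
      have : ∫ t in Wᶜ, h t ∂ρ + ((1+z₁)*H₁ + ((1+z₂)*H₂ + (1+z₃)*H₃)) = u := by
        linarith [hintsum, hzH]
      exact this
  have hfeas₁ : FeasibleMeasure h u ν₁ :=
    hfeas x₁ x₂ x₃ hx₁l.1 hx₁l.2 hx₂l.1 hx₂l.2 hx₃l.1 hx₃l.2 hxm hxH
  have hfeas₂ : FeasibleMeasure h u ν₂ := by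
    have := hfeas (-x₁) (-x₂) (-x₃) (by linarith) (by linarith) (by linarith) (by linarith)
      (by linarith) (by linarith) (by linarith) (by linarith)
    simpa [hν₂def, hc₁m, hc₂m, hc₃m, sub_eq_add_neg] using this
  -- the convex decomposition
  have hdecomp : ρ = (2⁻¹ : ℝ≥0∞) • ν₁ + ((1:ℝ≥0∞) - 2⁻¹) • ν₂ := by
    rw [show (1:ℝ≥0∞) - 2⁻¹ = 2⁻¹ by norm_num]
    ext s hs
    rw [Measure.add_apply, Measure.smul_apply, Measure.smul_apply, smul_eq_mul, smul_eq_mul,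
      hν₁app s hs, hν₂app s hs, hinter s hs]
    exact (aux_half_split _ _ _ _ _ _ _ _ _ _ hsum₁ hsum₂ hsum₃).symm
  have heq : ν₁ = ν₂ := hext ν₁ ν₂ hfeas₁ hfeas₂ 2⁻¹ (by norm_num) (by norm_num) hdecomp
  -- evaluate at each ball to get xᵢ = 0
  have hvanish : ∀ (i : Fin 3), True := fun _ => trivial
  have key : ∀ (U : Set ℝ), MeasurableSet U → U ⊆ W →
      ρ (U ∩ Wᶜ) = 0 := by
    intro U _ hUW
    have : U ∩ Wᶜ = ∅ := by
      apply Set.eq_empty_of_forall_notMem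
      rintro x ⟨hxU, hxW⟩
      exact hxW (hUW hxU)
    rw [this, measure_empty]
  have hz₁ : x₁ = 0 := by
    have h₁ := hν₁app U₁ hU₁m
    have h₂ := hν₂app U₁ hU₁m
    rw [heq] at h₁
    have e0 : ρ (U₁ ∩ Wᶜ) = 0 := key U₁ hU₁m (fun x hx => Or.inl (Or.inl hx))
    have e1 : U₁ ∩ U₁ = U₁ := Set.inter_self U₁
    have e2 : ρ (U₁ ∩ U₂) = 0 := by
      rw [Set.disjoint_iff_inter_eq_empty.1 hd₁₂, measure_empty]
    have e3 : ρ (U₁ ∩ U₃) = 0 := by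
      rw [Set.disjoint_iff_inter_eq_empty.1 hd₁₃, measure_empty]
    rw [h₂, e0, e1, e2, e3] at h₁
    simp only [mul_zero, add_zero, zero_add] at h₁
    -- h₁ : c₁m * ρ U₁ = c₁p * ρ U₁
    have := congrArg ENNReal.toReal h₁
    rw [ENNReal.toReal_mul, ENNReal.toReal_mul, hc₁m, hc₁p,
      ENNReal.toReal_ofReal (by linarith), ENNReal.toReal_ofReal (by linarith)] at this
    have hmul : (1 - x₁) * m₁ = (1 + x₁) * m₁ := this
    have h2 : x₁ * m₁ = 0 := by linarith
    rcases mul_eq_zero.1 h2 with h'|h'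
    · exact h'
    · exact absurd h' hm₁.ne'
  have hz₂ : x₂ = 0 := by
    have h₁ := hν₁app U₂ hU₂m
    have h₂ := hν₂app U₂ hU₂m
    rw [heq] at h₁
    have e0 : ρ (U₂ ∩ Wᶜ) = 0 := key U₂ hU₂m (fun x hx => Or.inl (Or.inr hx))
    have e1 : U₂ ∩ U₂ = U₂ := Set.inter_self U₂
    have e2 : ρ (U₂ ∩ U₁) = 0 := by
      rw [Set.inter_comm, Set.disjoint_iff_inter_eq_empty.1 hd₁₂, measure_empty]
    have e3 : ρ (U₂ ∩ U₃) = 0 := by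
      rw [Set.disjoint_iff_inter_eq_empty.1 hd₂₃, measure_empty]
    rw [h₂, e0, e1, e2, e3] at h₁
    simp only [mul_zero, add_zero, zero_add] at h₁
    have := congrArg ENNReal.toReal h₁
    rw [ENNReal.toReal_mul, ENNReal.toReal_mul, hc₂m, hc₂p,
      ENNReal.toReal_ofReal (by linarith), ENNReal.toReal_ofReal (by linarith)] at this
    have hmul : (1 - x₂) * m₂ = (1 + x₂) * m₂ := this
    have h2 : x₂ * m₂ = 0 := by linarith
    rcases mul_eq_zero.1 h2 with h'|h'
    · exact h'
    · exact absurd h' hm₂.ne'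
  have hz₃ : x₃ = 0 := by
    have h₁ := hν₁app U₃ hU₃m
    have h₂ := hν₂app U₃ hU₃m
    rw [heq] at h₁
    have e0 : ρ (U₃ ∩ Wᶜ) = 0 := key U₃ hU₃m (fun x hx => Or.inr hx)
    have e1 : U₃ ∩ U₃ = U₃ := Set.inter_self U₃
    have e2 : ρ (U₃ ∩ U₁) = 0 := by
      rw [Set.inter_comm, Set.disjoint_iff_inter_eq_empty.1 hd₁₃, measure_empty]
    have e3 : ρ (U₃ ∩ U₂) = 0 := by
      rw [Set.inter_comm, Set.disjoint_iff_inter_eq_empty.1 hd₂₃, measure_empty]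
    rw [h₂, e0, e1, e2, e3] at h₁
    simp only [mul_zero, add_zero, zero_add] at h₁
    have := congrArg ENNReal.toReal h₁
    rw [ENNReal.toReal_mul, ENNReal.toReal_mul, hc₃m, hc₃p,
      ENNReal.toReal_ofReal (by linarith), ENNReal.toReal_ofReal (by linarith)] at this
    have hmul : (1 - x₃) * m₃ = (1 + x₃) * m₃ := this
    have h2 : x₃ * m₃ = 0 := by linarith
    rcases mul_eq_zero.1 h2 with h'|h'
    · exact h'
    · exact absurd h' hm₃.ne'
  rcases hx0 with h|h|h
  exacts [h hz₁, h hz₂, h hz₃]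

/-- Extreme points of the convex set of probability measures on [0,∞) subject to the
single linear constraint ∫ h dρ = u (for continuous h with values in [0,1]) are
mixtures of at most two Dirac point masses. -/
theorem extreme_point_two_point_mixture (h : ℝ → ℝ) (u : ℝ)
    (hcont : Continuous h) (hrange : ∀ t, h t ∈ Set.Icc (0 : ℝ) 1)
    (hu : u ∈ Set.Icc (0 : ℝ) 1) (ρ : Measure ℝ) (hρ : FeasibleMeasure h u ρ)
    (hext : ∀ ρ₁ ρ₂ : Measure ℝ, FeasibleMeasure h u ρ₁ → FeasibleMeasure h u ρ₂ →
      ∀ a : ℝ≥0∞, 0 < a → a < 1 → ρ = a • ρ₁ + (1 - a) • ρ₂ → ρ₁ = ρ₂) :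
    ∃ (t₁ t₂ : ℝ) (p : ℝ≥0∞), p ≤ 1 ∧
      ρ = p • Measure.dirac t₁ + (1 - p) • Measure.dirac t₂ := by
  set S : Set ℝ := {t : ℝ | ∀ U : Set ℝ, IsOpen U → t ∈ U → 0 < ρ U} with hSdef
  have hScompl : ρ Sᶜ = 0 := aux_compl_supp ρ
  by_cases hpair : ∃ t₁ t₂ : ℝ, S ⊆ {t₁, t₂}
  · obtain ⟨t₁, t₂, hsub⟩ := hpair
    haveI := hρ.1
    obtain ⟨p, hp, heq⟩ := aux_two_point ρ t₁ t₂
      (measure_mono_null (Set.compl_subset_compl.2 hsub) hScompl)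
    exact ⟨t₁, t₂, p, hp, heq⟩
  · exfalso
    push_neg at hpair
    obtain ⟨a, haS, -⟩ := Set.not_subset.1 (hpair 0 0)
    obtain ⟨b, hbS, hba⟩ := Set.not_subset.1 (hpair a a)
    obtain ⟨c, hcS, hcab⟩ := Set.not_subset.1 (hpair a b)
    have hba' : b ≠ a := by simpa using hba
    have hca : c ≠ a := fun hh => hcab (by simp [hh])
    have hcb : c ≠ b := fun hh => hcab (by simp [hh])
    exact aux_three_point h u hcont hrange ρ hρ hext a b c hba'.symm hca.symm hcb.symm
      haS hbS hcS
end
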